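/- arXiv:1205.5222 — 8 statements merged into one kernel-verified Lean document; each statement's English description precedes it below -/
import Mathlib

section
/- Let n ≥ 1, ℏ > 0, and let Σ be a real symmetric positive definite 2n×2n matrix with Σ + (iℏ/2)J positive semidefinite (as a complex Hermitian matrix) and Σ_{1,1}·Σ_{n+1,n+1} = (Σ_{1,n+1})² + ℏ²/4. If G is a real symmetric positive definite symplectic 2n×2n matrix such that (πℏ)^{-n} exp(−(1/ℏ) zᵀGz) ≤ (2π)^{-n/2}(det Σ)^{-1/2} exp(−(1/2) zᵀΣ^{-1}z) for all z ∈ ℝ^{2n}, then the covariance matrix (ℏ/2)G^{-1} of the corresponding pure Gaussian state agrees with Σ in the three entries pertaining to x_1 and p_1: (ℏ/2)(G^{-1})_{1,1} = Σ_{1,1}, (ℏ/2)(G^{-1})_{1,n+1} = Σ_{1,n+1}, and (ℏ/2)(G^{-1})_{n+1,n+1} = Σ_{n+1,n+1}. -/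
open Matrix MeasureTheory
open scoped ComplexOrder

noncomputable section

/-- The standard symplectic matrix `J = [[0, I], [-I, 0]]` of size `2n`, indexed by
`Fin n ⊕ Fin n`: `Sum.inl j` is the coordinate `x_j` and `Sum.inr j` is `p_j`. -/
def stdJ (n : ℕ) : Matrix (Fin n ⊕ Fin n) (Fin n ⊕ Fin n) ℝ :=
  Matrix.fromBlocks 0 1 (-1) 0

/-- A real `2n × 2n` matrix `S` is symplectic if `Sᵀ J S = J`. -/
def IsSymplectic {n : ℕ} (S : Matrix (Fin n ⊕ Fin n) (Fin n ⊕ Fin n) ℝ) : Prop :=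
  Sᵀ * stdJ n * S = stdJ n

/-!
Comparing the two Gaussians along the rays `t • z`, `t → ∞`, shows `Σ⁻¹ ≤ (2/ℏ) G` as quadratic
forms, and inverting, `V := (ℏ/2) G⁻¹ ≤ Σ`. Since `G` is symplectic, `G⁻¹ = -J Gᵀ J`, so
`G_{x₁x₁} = (G⁻¹)_{p₁p₁}`; as `G_{x₁x₁}` dominates the `(x₁, x₁)` entry of the inverse of the
`{x₁, p₁}`-block of `G⁻¹`, that block has determinant at least `1`, i.e. the block `V₂` of `V`
satisfies the Robertson–Schrödinger inequality `det V₂ ≥ ℏ²/4`. Saturation says that the block `Σ₂`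
of `Σ` has `det Σ₂ = ℏ²/4`, and a positive definite `2 × 2` matrix `V₂ ≤ Σ₂` with
`det Σ₂ ≤ det V₂` equals `Σ₂`.
-/

open Filter Real in
lemma le_of_forall_mul_exp_le {c₁ c₂ a b : ℝ} (hc₁ : 0 < c₁)
    (h : ∀ t : ℝ, c₁ * exp (-(a * t ^ 2)) ≤ c₂ * exp (-(b * t ^ 2))) : b ≤ a := by
  by_contra! hab
  have hlim : Tendsto (fun t : ℝ ↦ c₂ * exp ((a - b) * t ^ 2)) atTop (nhds 0) := by
    simpa using (tendsto_exp_atBot.comp ((tendsto_pow_atTop two_ne_zero).const_mul_atTop_of_neg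
      (sub_neg.2 hab))).const_mul c₂
  refine hc₁.not_ge (ge_of_tendsto' hlim fun t ↦ ?_)
  have := h t
  rw [show -(b * t ^ 2) = (a - b) * t ^ 2 + -(a * t ^ 2) by ring, exp_add, ← mul_assoc] at this
  exact le_of_mul_le_mul_right this (exp_pos _)

lemma eq_of_forall_quad_le_of_det_le {a b c A B C : ℝ} (ha : 0 < a) (hdet_pos : 0 < a * b - c ^ 2)
    (hle : ∀ s t, a * s ^ 2 + 2 * c * (s * t) + b * t ^ 2 ≤ A * s ^ 2 + 2 * C * (s * t) + B * t ^ 2)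
    (hdet : A * B - C ^ 2 ≤ a * b - c ^ 2) :
    a = A ∧ c = C ∧ b = B := by
  obtain ⟨p, rfl⟩ : ∃ p, A = a + p := ⟨A - a, by ring⟩
  obtain ⟨q, rfl⟩ : ∃ q, C = c + q := ⟨C - c, by ring⟩
  obtain ⟨r, rfl⟩ : ∃ r, B = b + r := ⟨B - b, by ring⟩
  have hb : 0 < b := by nlinarith [sq_nonneg c]
  have hp : 0 ≤ p := by nlinarith [hle 1 0]
  have hr : 0 ≤ r := by nlinarith [hle 0 1]
  have hdisc : q ^ 2 ≤ p * r := by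
    have := discrim_le_zero (a := p) (b := 2 * q) (c := r) fun s ↦ by nlinarith [hle s 1]
    rw [discrim] at this
    nlinarith
  have hcross : a * r + b * p ≤ 2 * c * q := by nlinarith
  have hq : q = 0 := by
    have h1 : 4 * (a * b) * q ^ 2 ≤ (a * r + b * p) ^ 2 := by
      nlinarith [sq_nonneg (a * r - b * p),
        mul_le_mul_of_nonneg_left hdisc (by positivity : 0 ≤ 4 * (a * b))]
    have h2 : (a * r + b * p) ^ 2 ≤ (2 * c * q) ^ 2 := pow_le_pow_left₀ (by positivity) hcross 2
    have h3 : (a * b - c ^ 2) * q ^ 2 ≤ 0 := by nlinarith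
    exact pow_eq_zero_iff two_ne_zero |>.1
      (le_antisymm (nonpos_of_mul_nonpos_right h3 hdet_pos) (sq_nonneg q))
  subst hq
  have hp0 : p = 0 := by nlinarith
  have hr0 : r = 0 := by nlinarith
  simp [hp0, hr0]

namespace Matrix

lemma PosDef.isSymm {ι : Type*} {N : Matrix ι ι ℝ} (hN : N.PosDef) : N.IsSymm :=
  isHermitian_iff_isSymm.1 hN.isHermitian

variable {ι : Type*} [Fintype ι]

lemma IsSymm.dotProduct_mulVec_comm {M : Matrix ι ι ℝ} (hM : M.IsSymm) (u v : ι → ℝ) :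
    u ⬝ᵥ M *ᵥ v = v ⬝ᵥ M *ᵥ u := by
  rw [dotProduct_mulVec, ← hM.eq, vecMul_transpose, dotProduct_comm, hM.eq]

open Real in
lemma quadForm_le_of_forall_mul_exp_le {A B : Matrix ι ι ℝ} {c₁ c₂ a b : ℝ} (hc₁ : 0 < c₁)
    (h : ∀ z : ι → ℝ, c₁ * exp (-a * (z ⬝ᵥ A *ᵥ z)) ≤ c₂ * exp (-b * (z ⬝ᵥ B *ᵥ z)))
    (z : ι → ℝ) : b * (z ⬝ᵥ B *ᵥ z) ≤ a * (z ⬝ᵥ A *ᵥ z) :=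
  le_of_forall_mul_exp_le hc₁ fun t ↦ by
    convert h (t • z) using 4 <;>
      simp only [mulVec_smul, dotProduct_smul, smul_dotProduct, smul_eq_mul] <;> ring

variable [DecidableEq ι]

lemma IsSymm.quadForm_single_add_single {N : Matrix ι ι ℝ} (hN : N.IsSymm) (i j : ι) (s t : ℝ) :
    (Pi.single i s + Pi.single j t) ⬝ᵥ N *ᵥ (Pi.single i s + Pi.single j t) =
      N i i * s ^ 2 + 2 * N i j * (s * t) + N j j * t ^ 2 := by
  simp [mulVec_add, hN.apply i j]
  ring

lemma PosDef.two_mul_dotProduct_le {N : Matrix ι ι ℝ} (hN : N.PosDef) (w z : ι → ℝ) :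
    2 * (w ⬝ᵥ z) ≤ w ⬝ᵥ N *ᵥ w + z ⬝ᵥ N⁻¹ *ᵥ z := by
  set u := N⁻¹ *ᵥ z
  have hNu : N *ᵥ u = z := by
    rw [mulVec_mulVec, mul_nonsing_inv _ (isUnit_iff_ne_zero.2 hN.det_pos.ne'), one_mulVec]
  have h := hN.posSemidef.dotProduct_mulVec_nonneg (w - u)
  rw [star_trivial, mulVec_sub, dotProduct_sub, sub_dotProduct, sub_dotProduct, hNu,
    hN.isSymm.dotProduct_mulVec_comm u w, hNu, dotProduct_comm u z] at h
  linarith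

lemma PosDef.quadForm_inv_le_of_inv_le {A B : Matrix ι ι ℝ} (hA : A.PosDef) (hB : IsUnit B.det)
    (h : ∀ z, z ⬝ᵥ A⁻¹ *ᵥ z ≤ z ⬝ᵥ B *ᵥ z) (z : ι → ℝ) : z ⬝ᵥ B⁻¹ *ᵥ z ≤ z ⬝ᵥ A *ᵥ z := by
  have key := hA.inv.two_mul_dotProduct_le (B⁻¹ *ᵥ z) z
  have hw : B *ᵥ (B⁻¹ *ᵥ z) = z := by rw [mulVec_mulVec, mul_nonsing_inv _ hB, one_mulVec]
  have hBw := h (B⁻¹ *ᵥ z)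
  rw [nonsing_inv_nonsing_inv _ (isUnit_iff_ne_zero.2 hA.det_pos.ne')] at key
  rw [hw, dotProduct_comm (B⁻¹ *ᵥ z) z] at hBw
  rw [dotProduct_comm (B⁻¹ *ᵥ z) z] at key
  linarith

lemma PosDef.det_two_pos {N : Matrix ι ι ℝ} (hN : N.PosDef) {i j : ι} (hij : i ≠ j) :
    0 < N i i * N j j - N i j ^ 2 := by
  have hv : (Pi.single i (N j j) + Pi.single j (-N i j) : ι → ℝ) ≠ 0 := fun h ↦ by
    simpa [hij, hN.diag_pos.ne'] using congrFun h i
  have := hN.dotProduct_mulVec_pos hv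
  rw [star_trivial, hN.isSymm.quadForm_single_add_single] at this
  have hjj : 0 < N j j := hN.diag_pos
  nlinarith

lemma PosDef.div_le_inv_apply {N : Matrix ι ι ℝ} (hN : N.PosDef) {i j : ι} (hij : i ≠ j) :
    N j j / (N i i * N j j - N i j ^ 2) ≤ N⁻¹ i i := by
  set d := N i i * N j j - N i j ^ 2 with hd_eq
  have hd : 0 < d := hN.det_two_pos hij
  -- test against the `i`-th column of the inverse of the `{i, j}`-block of `N`
  have key := hN.two_mul_dotProduct_le
    (Pi.single i (N j j / d) + Pi.single j (-N i j / d)) (Pi.single i 1)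
  rw [hN.isSymm.quadForm_single_add_single] at key
  simp [hij] at key
  have hquad : N i i * (N j j / d) ^ 2 + 2 * N i j * (N j j / d * (-N i j / d)) +
      N j j * (-N i j / d) ^ 2 = N j j / d := by
    field_simp
    rw [hd_eq]
    ring
  linarith

end Matrix

lemma stdJ_mul_stdJ (n : ℕ) : stdJ n * stdJ n = -1 := by
  rw [stdJ, fromBlocks_multiply, ← fromBlocks_one, fromBlocks_neg]
  simp

namespace IsSymplectic

variable {n : ℕ} {S : Matrix (Fin n ⊕ Fin n) (Fin n ⊕ Fin n) ℝ}

lemma inv_eq (hS : IsSymplectic S) : S⁻¹ = -(stdJ n * Sᵀ * stdJ n) := by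
  refine inv_eq_left_inv ?_
  rw [neg_mul, Matrix.mul_assoc, Matrix.mul_assoc, ← Matrix.mul_assoc Sᵀ, hS, stdJ_mul_stdJ,
    neg_neg]

lemma inv_apply_inr_inr (hS : IsSymplectic S) (i j : Fin n) :
    S⁻¹ (.inr i) (.inr j) = S (.inl j) (.inl i) := by
  simp [hS.inv_eq, stdJ, mul_apply, Fintype.sum_sum_type, one_apply]

lemma one_le_inv_det_two (hS : IsSymplectic S) (hpos : S.PosDef) (i : Fin n) :
    1 ≤ S⁻¹ (.inl i) (.inl i) * S⁻¹ (.inr i) (.inr i) - S⁻¹ (.inl i) (.inr i) ^ 2 := by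
  have hle := hpos.inv.div_le_inv_apply (i := .inl i) (j := .inr i) Sum.inl_ne_inr
  rw [nonsing_inv_nonsing_inv _ (isUnit_iff_ne_zero.2 hpos.det_pos.ne'), ← hS.inv_apply_inr_inr,
    div_le_iff₀ (hpos.inv.det_two_pos Sum.inl_ne_inr)] at hle
  nlinarith [hpos.inv.diag_pos (i := .inr i)]

end IsSymplectic

theorem stmt1_general {n : ℕ} (hn : 0 < n) (ℏ : ℝ) (hℏ : 0 < ℏ)
    (Cov : Matrix (Fin n ⊕ Fin n) (Fin n ⊕ Fin n) ℝ)
    (hCovPos : Cov.PosDef)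
    (hsat : Cov (Sum.inl ⟨0, hn⟩) (Sum.inl ⟨0, hn⟩) * Cov (Sum.inr ⟨0, hn⟩) (Sum.inr ⟨0, hn⟩)
        = Cov (Sum.inl ⟨0, hn⟩) (Sum.inr ⟨0, hn⟩) ^ 2 + ℏ ^ 2 / 4)
    (G : Matrix (Fin n ⊕ Fin n) (Fin n ⊕ Fin n) ℝ)
    (hGPos : G.PosDef) (hGSp : IsSymplectic G)
    (hdom : ∀ z : Fin n ⊕ Fin n → ℝ,
        (Real.pi * ℏ) ^ (-(n : ℝ)) * Real.exp (-(1 / ℏ) * (z ⬝ᵥ G.mulVec z)) ≤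
          (2 * Real.pi) ^ (-(n : ℝ) / 2) * Cov.det ^ (-(1 : ℝ) / 2) *
            Real.exp (-(1 / 2) * (z ⬝ᵥ Cov⁻¹.mulVec z))) :
    (ℏ / 2) * G⁻¹ (Sum.inl ⟨0, hn⟩) (Sum.inl ⟨0, hn⟩) = Cov (Sum.inl ⟨0, hn⟩) (Sum.inl ⟨0, hn⟩) ∧
    (ℏ / 2) * G⁻¹ (Sum.inl ⟨0, hn⟩) (Sum.inr ⟨0, hn⟩) = Cov (Sum.inl ⟨0, hn⟩) (Sum.inr ⟨0, hn⟩) ∧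
    (ℏ / 2) * G⁻¹ (Sum.inr ⟨0, hn⟩) (Sum.inr ⟨0, hn⟩) = Cov (Sum.inr ⟨0, hn⟩) (Sum.inr ⟨0, hn⟩) := by
  have hCovInv_le : ∀ z, z ⬝ᵥ Cov⁻¹ *ᵥ z ≤ z ⬝ᵥ ((2 / ℏ) • G) *ᵥ z := fun z ↦ by
    have := quadForm_le_of_forall_mul_exp_le (by positivity) hdom z
    rw [smul_mulVec, dotProduct_smul, smul_eq_mul]
    linarith [show 2 / ℏ * (z ⬝ᵥ G *ᵥ z) = 2 * (1 / ℏ * (z ⬝ᵥ G *ᵥ z)) by ring]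
  have hinv : ((2 / ℏ) • G)⁻¹ = (ℏ / 2) • G⁻¹ := by
    refine inv_eq_left_inv ?_
    rw [smul_mul_smul_comm, nonsing_inv_mul _ (isUnit_iff_ne_zero.2 hGPos.det_pos.ne'),
      div_mul_div_comm, mul_comm ℏ, div_self (by positivity), one_smul]
  have hV_le := hCovPos.quadForm_inv_le_of_inv_le
    (isUnit_iff_ne_zero.2 (by simp [hℏ.ne', hGPos.det_pos.ne'])) hCovInv_le
  rw [hinv] at hV_le
  have hquad (s t : ℝ) := hV_le (Pi.single (.inl ⟨0, hn⟩) s + Pi.single (.inr ⟨0, hn⟩) t)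
  simp only [smul_mulVec, dotProduct_smul, smul_eq_mul, hGPos.inv.isSymm.quadForm_single_add_single,
    hCovPos.isSymm.quadForm_single_add_single] at hquad
  have hunc := hGSp.one_le_inv_det_two hGPos ⟨0, hn⟩
  exact eq_of_forall_quad_le_of_det_le (by nlinarith [hGPos.inv.diag_pos (i := .inl ⟨0, hn⟩)])
    (by nlinarith) (fun s t ↦ by linarith [hquad s t]) (by nlinarith)

/-- Under the same hypotheses as Statement 0 (quantum condition plus saturation of
the first Robertson–Schrödinger inequality), any symmetric positive definite symplectic matrix `G`
whose Gaussian Wigner function is dominated by that of the mixed state has covariance matrix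
`(ℏ/2)G⁻¹` agreeing with `Σ` in the three entries pertaining to `x₁` and `p₁`. -/
theorem stmt1 {n : ℕ} (hn : 0 < n) (ℏ : ℝ) (hℏ : 0 < ℏ)
    (Cov : Matrix (Fin n ⊕ Fin n) (Fin n ⊕ Fin n) ℝ)
    (hCovSymm : Cov.IsSymm) (hCovPos : Cov.PosDef)
    (hquant : (Cov.map Complex.ofReal
        + (Complex.I * ((ℏ : ℂ) / 2)) • (stdJ n).map Complex.ofReal).PosSemidef)
    (hsat : Cov (Sum.inl ⟨0, hn⟩) (Sum.inl ⟨0, hn⟩) * Cov (Sum.inr ⟨0, hn⟩) (Sum.inr ⟨0, hn⟩)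
        = Cov (Sum.inl ⟨0, hn⟩) (Sum.inr ⟨0, hn⟩) ^ 2 + ℏ ^ 2 / 4)
    (G : Matrix (Fin n ⊕ Fin n) (Fin n ⊕ Fin n) ℝ)
    (hGSymm : G.IsSymm) (hGPos : G.PosDef) (hGSp : IsSymplectic G)
    (hdom : ∀ z : Fin n ⊕ Fin n → ℝ,
        (Real.pi * ℏ) ^ (-(n : ℝ)) * Real.exp (-(1 / ℏ) * (z ⬝ᵥ G.mulVec z)) ≤
          (2 * Real.pi) ^ (-(n : ℝ) / 2) * Cov.det ^ (-(1 : ℝ) / 2) *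
            Real.exp (-(1 / 2) * (z ⬝ᵥ Cov⁻¹.mulVec z))) :
    (ℏ / 2) * G⁻¹ (Sum.inl ⟨0, hn⟩) (Sum.inl ⟨0, hn⟩) = Cov (Sum.inl ⟨0, hn⟩) (Sum.inl ⟨0, hn⟩) ∧
    (ℏ / 2) * G⁻¹ (Sum.inl ⟨0, hn⟩) (Sum.inr ⟨0, hn⟩) = Cov (Sum.inl ⟨0, hn⟩) (Sum.inr ⟨0, hn⟩) ∧
    (ℏ / 2) * G⁻¹ (Sum.inr ⟨0, hn⟩) (Sum.inr ⟨0, hn⟩) = Cov (Sum.inr ⟨0, hn⟩) (Sum.inr ⟨0, hn⟩) :=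
  stmt1_general hn ℏ hℏ Cov hCovPos hsat G hGPos hGSp hdom
end
end

section
/- (Williamson's symplectic diagonalization theorem.) Let M be a real symmetric positive definite matrix of size 2n. Then there exist a real symplectic 2n×2n matrix S and positive real numbers λ_1, …, λ_n such that SᵀMS is the block diagonal matrix [[Λ, 0],[0, Λ]] with Λ = diag(λ_1, …, λ_n). -/
/-
Write `M = A²` with `A = √M` symmetric and invertible. The matrix `K = A⁻¹ J A⁻¹` is then
skew-symmetric and invertible, so it has the real normal form of a nondegenerate skew-adjoint
operator: an orthogonal `O` with `Oᵀ K O = J · diag(d, d)`, `d > 0`. This normal form is built by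
induction on `n`, splitting off the invariant plane spanned by a unit eigenvector `w` of the
positive operator `-K²` and by `K w`; the orthogonal complement of an invariant subspace of a
skew-adjoint operator is again invariant. Now `T = A⁻¹ O` satisfies `Tᵀ M T = 1` and
`Tᵀ J T = J · diag(d, d)`, and rescaling by `diag(d^{-1/2}, d^{-1/2})`, which commutes with `J`,
gives the symplectic `S` with `Sᵀ M S = diag(d⁻¹, d⁻¹)`.
-/

open Matrix MeasureTheory
open scoped ComplexOrder

noncomputable section

open Module Submodule
open scoped RealInnerProductSpace

theorem orthonormal_sumElim_iff {𝕜 E ι κ : Type*} [RCLike 𝕜] [NormedAddCommGroup E]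
    [InnerProductSpace 𝕜 E] {u : ι → E} {w : κ → E} :
    Orthonormal 𝕜 (Sum.elim u w) ↔
      Orthonormal 𝕜 u ∧ Orthonormal 𝕜 w ∧ ∀ i j, inner 𝕜 (u i) (w j) = 0 := by
  classical
  simp only [orthonormal_iff_ite, Sum.forall, Sum.elim_inl, Sum.elim_inr, Sum.inl.injEq,
    Sum.inr.injEq, reduceCtorEq, if_false, forall_and]
  exact ⟨fun h => ⟨h.1.1, h.2.2, h.2.1⟩,
    fun h => ⟨⟨h.1, fun b a => inner_eq_zero_symm.1 (h.2.2 a b)⟩, h.2.2, h.2.1⟩⟩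

theorem finrank_orthogonal_span_add_card {E ι : Type*} [NormedAddCommGroup E]
    [InnerProductSpace ℝ E] [FiniteDimensional ℝ E] [Fintype ι] {v : ι → E}
    (hv : Orthonormal ℝ v) :
    finrank ℝ (span ℝ (Set.range v))ᗮ + Fintype.card ι = finrank ℝ E := by
  rw [← finrank_span_eq_card hv.linearIndependent, add_comm,
    Submodule.finrank_add_finrank_orthogonal]

section SkewAdjoint

variable {E : Type*} [NormedAddCommGroup E] [InnerProductSpace ℝ E] {f : E →ₗ[ℝ] E}

theorem inner_apply_self_eq_zero_of_skew (hf : ∀ x y, ⟪f x, y⟫ = -⟪x, f y⟫) (x : E) :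
    ⟪f x, x⟫ = 0 := by
  have := hf x x
  rw [real_inner_comm (f x) x] at this
  linarith

theorem isSymmetric_neg_comp_self_of_skew (hf : ∀ x y, ⟪f x, y⟫ = -⟪x, f y⟫) :
    (-(f ∘ₗ f)).IsSymmetric := fun x y => by
  simp only [LinearMap.neg_apply, LinearMap.comp_apply, inner_neg_left, inner_neg_right,
    hf (f x) y, hf x (f y), neg_neg]

theorem orthogonal_mem_invtSubmodule_of_skew (hf : ∀ x y, ⟪f x, y⟫ = -⟪x, f y⟫)
    {p : Submodule ℝ E} (hp : p ∈ Module.End.invtSubmodule f) :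
    pᗮ ∈ Module.End.invtSubmodule f := fun x hx y hy => by
  rw [← neg_eq_zero, ← hf, hx (f y) (hp hy)]

theorem exists_orthonormal_pair_of_skew [FiniteDimensional ℝ E]
    (hf : ∀ x y, ⟪f x, y⟫ = -⟪x, f y⟫) (hinj : Function.Injective f)
    (hpos : 0 < finrank ℝ E) :
    ∃ (u w : E) (r : ℝ), Orthonormal ℝ ![u, w] ∧ 0 < r ∧ f u = -r • w ∧ f w = r • u := by
  have hg := isSymmetric_neg_comp_self_of_skew hf
  set w := hg.eigenvectorBasis rfl ⟨0, hpos⟩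
  set μ := hg.eigenvalues rfl ⟨0, hpos⟩
  have hw : ‖w‖ = 1 := (hg.eigenvectorBasis rfl).orthonormal.1 _
  have hgw : f (f w) = -(μ • w) := by
    have := hg.apply_eigenvectorBasis rfl ⟨0, hpos⟩
    simp only [LinearMap.neg_apply, LinearMap.comp_apply, RCLike.ofReal_real_eq_id, id] at this
    rw [← this, neg_neg]
  set r := ‖f w‖
  have hr : 0 < r := norm_pos_iff.2 fun h =>
    by simp [hinj (h.trans (map_zero f).symm)] at hw
  have hμ : μ = r ^ 2 := by
    have := hf (f w) w
    rw [hgw, inner_neg_left, real_inner_smul_left, real_inner_self_eq_norm_sq, hw,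
      real_inner_self_eq_norm_sq] at this
    linarith
  refine ⟨r⁻¹ • f w, w, r, ?_, hr, ?_, ?_⟩
  · simp [orthonormal_vecCons_iff, norm_smul, hw, abs_of_pos hr,
      real_inner_smul_left, inner_apply_self_eq_zero_of_skew hf]
    exact inv_mul_cancel₀ hr.ne'
  · rw [map_smul, hgw, hμ, smul_neg, smul_smul, neg_smul]
    congr 2
    field_simp
  · rw [smul_smul, mul_inv_cancel₀ hr.ne', one_smul]

theorem exists_orthonormal_normalForm_of_skew [FiniteDimensional ℝ E] {n : ℕ}
    (hdim : finrank ℝ E = 2 * n) (hf : ∀ x y, ⟪f x, y⟫ = -⟪x, f y⟫)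
    (hinj : Function.Injective f) :
    ∃ (u w : Fin n → E) (d : Fin n → ℝ), Orthonormal ℝ (Sum.elim u w) ∧ (∀ j, 0 < d j) ∧
      (∀ j, f (u j) = -d j • w j) ∧ ∀ j, f (w j) = d j • u j := by
  induction n generalizing E with
  | zero =>
    exact ⟨Fin.elim0, Fin.elim0, Fin.elim0, .of_isEmpty _, (·.elim0), (·.elim0), (·.elim0)⟩
  | succ n ih =>
    obtain ⟨u₀, w₀, r, hpair, hr, hfu₀, hfw₀⟩ :=
      exists_orthonormal_pair_of_skew hf hinj (by omega)
    set p := span ℝ (Set.range ![u₀, w₀])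
    have hp : p ∈ Module.End.invtSubmodule f := by
      rw [Module.End.mem_invtSubmodule, span_le]
      rintro _ ⟨i, rfl⟩
      fin_cases i
      · simpa [hfu₀] using smul_mem p (-r) (subset_span ⟨1, rfl⟩)
      · simpa [hfw₀] using smul_mem p r (subset_span ⟨0, rfl⟩)
    have hW := orthogonal_mem_invtSubmodule_of_skew hf hp
    have hdimW : finrank ℝ pᗮ = 2 * n := by
      have : finrank ℝ pᗮ + 2 = finrank ℝ E := finrank_orthogonal_span_add_card hpair
      omega
    obtain ⟨u, w, d, hon, hd, hfu, hfw⟩ := ih hdimW (f := f.restrict hW)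
      (fun x y => hf x y) (fun x y hxy => Subtype.ext (hinj (congrArg Subtype.val hxy)))
    have hu₀ : ∀ z : pᗮ, ⟪u₀, z⟫ = 0 := fun z =>
      inner_right_of_mem_orthogonal (subset_span (Set.mem_range_self 0)) z.2
    have hw₀ : ∀ z : pᗮ, ⟪w₀, z⟫ = 0 := fun z =>
      inner_right_of_mem_orthogonal (subset_span (Set.mem_range_self 1)) z.2
    have hon' := hon.comp_linearIsometry pᗮ.subtypeₗᵢ
    rw [Sum.comp_elim, orthonormal_sumElim_iff] at hon'
    refine ⟨vecCons u₀ (fun j => u j), vecCons w₀ (fun j => w j), vecCons r d, ?_,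
      Fin.cases hr hd, Fin.cases hfu₀ fun j => ?_, Fin.cases hfw₀ fun j => ?_⟩
    · have h01 : ⟪u₀, w₀⟫ = 0 := hpair.inner_eq_zero (i := 0) (j := 1) (by decide)
      rw [orthonormal_sumElim_iff, orthonormal_vecCons_iff, orthonormal_vecCons_iff]
      refine ⟨⟨hpair.1 0, fun j => hu₀ (u j), hon'.1⟩, ⟨hpair.1 1, fun j => hw₀ (w j), hon'.2.1⟩,
        Fin.cases (Fin.cases h01 fun j => hu₀ (w j)) fun i => Fin.cases ?_ fun j => ?_⟩
      · simpa [real_inner_comm] using hw₀ (u i)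
      · simpa using hon'.2.2 i j
    · exact congrArg Subtype.val (hfu j)
    · exact congrArg Subtype.val (hfw j)

end SkewAdjoint

namespace Matrix

theorem transpose_mul_mul_mul {ι : Type*} [Fintype ι] (X Y Z : Matrix ι ι ℝ) :
    (X * Y)ᵀ * Z * (X * Y) = Yᵀ * (Xᵀ * Z * X) * Y := by
  simp only [transpose_mul, Matrix.mul_assoc]

variable {ι : Type*} [Fintype ι] [DecidableEq ι]

theorem transpose_mul_mul_of_cols_apply {κ : Type*} (K : Matrix ι ι ℝ)
    (v : κ → EuclideanSpace ℝ ι) (a b : κ) :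
    ((of fun i j => v j i)ᵀ * K * of fun i j => v j i) a b = ⟪v a, toEuclideanLin K (v b)⟫ := by
  simp only [mul_apply, transpose_apply, of_apply, EuclideanSpace.inner_eq_star_dotProduct,
    toLpLin_apply, star_trivial, dotProduct, mulVec, Finset.sum_mul]
  rw [Finset.sum_comm]
  exact Finset.sum_congr rfl fun _ _ => Finset.sum_congr rfl fun _ _ => by ring

theorem inner_toEuclideanLin_of_transpose_eq_neg {K : Matrix ι ι ℝ} (hK : Kᵀ = -K)
    (x y : EuclideanSpace ℝ ι) :
    ⟪toEuclideanLin K x, y⟫ = -⟪x, toEuclideanLin K y⟫ := by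
  rw [← LinearMap.adjoint_inner_right, ← toEuclideanLin_conjTranspose_eq_adjoint,
    conjTranspose_eq_transpose_of_trivial, hK, map_neg, LinearMap.neg_apply, inner_neg_right]

theorem injective_toEuclideanLin_of_isUnit {K : Matrix ι ι ℝ} (hK : IsUnit K) :
    Function.Injective (toEuclideanLin K) := fun x y hxy => by
  simp only [toLpLin_apply] at hxy
  exact WithLp.ofLp_injective _ (mulVec_injective_iff_isUnit.2 hK (WithLp.toLp_injective _ hxy))

theorem PosDef.exists_sqrt {M : Matrix ι ι ℝ} (hM : M.PosDef) :
    ∃ A : Matrix ι ι ℝ, Aᵀ = A ∧ IsUnit A ∧ A * A = M := by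
  open scoped MatrixOrder in
  exact ⟨CFC.sqrt M, (CFC.sqrt_nonneg M).isSelfAdjoint,
    (CFC.isUnit_sqrt_iff M hM.posSemidef.nonneg).2 hM.isUnit,
    CFC.sqrt_mul_sqrt_self M hM.posSemidef.nonneg⟩

end Matrix

theorem stdJ_transpose (n : ℕ) : (stdJ n)ᵀ = -stdJ n := by
  simp [stdJ, fromBlocks_transpose, fromBlocks_neg]

theorem isUnit_stdJ (n : ℕ) : IsUnit (stdJ n) := by
  have : stdJ n = -J (Fin n) ℝ := by simp [stdJ, J, fromBlocks_neg]
  rw [this, IsUnit.neg_iff, isUnit_iff_isUnit_det]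
  exact isUnit_det_J (Fin n) ℝ

theorem exists_orthogonal_transpose_mul_mul_eq_stdJ_mul_diagonal {n : ℕ}
    (K : Matrix (Fin n ⊕ Fin n) (Fin n ⊕ Fin n) ℝ) (hK : Kᵀ = -K) (hKu : IsUnit K) :
    ∃ (O : Matrix (Fin n ⊕ Fin n) (Fin n ⊕ Fin n) ℝ) (d : Fin n → ℝ),
      Oᵀ * O = 1 ∧ (∀ j, 0 < d j) ∧ Oᵀ * K * O = stdJ n * diagonal (Sum.elim d d) := by
  have hdim : finrank ℝ (EuclideanSpace ℝ (Fin n ⊕ Fin n)) = 2 * n := by simp [two_mul]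
  obtain ⟨u, w, d, hon, hd, hfu, hfw⟩ := exists_orthonormal_normalForm_of_skew hdim
    (inner_toEuclideanLin_of_transpose_eq_neg hK) (injective_toEuclideanLin_of_isUnit hKu)
  refine ⟨of fun i j => Sum.elim u w j i, d, ?_, hd, ?_⟩
  · ext a b
    rw [← Matrix.mul_one (of _)ᵀ, transpose_mul_mul_of_cols_apply]
    simpa [one_apply] using orthonormal_iff_ite.1 hon a b
  · obtain ⟨hu, hw, huw⟩ := orthonormal_sumElim_iff.1 hon
    have hwu : ∀ i j, ⟪w i, u j⟫ = 0 := fun i j => by rw [real_inner_comm, huw]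
    ext (i | i) (k | k) <;>
      simp [transpose_mul_mul_of_cols_apply, mul_diagonal, hfu, hfw, inner_smul_right, stdJ,
        orthonormal_iff_ite.1 hu, orthonormal_iff_ite.1 hw, huw, hwu, one_apply]

theorem diagonal_mul_stdJ_mul_diagonal_eq_stdJ {n : ℕ} {d e : Fin n → ℝ} (h : e * d * e = 1) :
    diagonal (Sum.elim e e) * (stdJ n * diagonal (Sum.elim d d)) * diagonal (Sum.elim e e) =
      stdJ n := by
  have h' (i : Fin n) : e i * d i * e i = 1 := congrFun h i
  simp [stdJ, ← fromBlocks_diagonal, fromBlocks_multiply, diagonal_mul_diagonal, h', ← diagonal_one]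

theorem exists_transpose_mul_mul_eq_one_and_stdJ_mul_diagonal {n : ℕ}
    (M : Matrix (Fin n ⊕ Fin n) (Fin n ⊕ Fin n) ℝ) (hM : M.PosDef) :
    ∃ (T : Matrix (Fin n ⊕ Fin n) (Fin n ⊕ Fin n) ℝ) (d : Fin n → ℝ), (∀ j, 0 < d j) ∧
      Tᵀ * M * T = 1 ∧ Tᵀ * stdJ n * T = stdJ n * diagonal (Sum.elim d d) := by
  obtain ⟨A, hAT, hAu, hAA⟩ := hM.exists_sqrt
  have hAiT : (A⁻¹)ᵀ = A⁻¹ := by rw [transpose_nonsing_inv, hAT]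
  have hAd := (isUnit_iff_isUnit_det A).1 hAu
  have hK : (A⁻¹ * stdJ n * A⁻¹)ᵀ = -(A⁻¹ * stdJ n * A⁻¹) := by
    simp [transpose_mul, hAiT, stdJ_transpose, Matrix.mul_assoc]
  have hKu : IsUnit (A⁻¹ * stdJ n * A⁻¹) :=
    ((isUnit_nonsing_inv_iff.2 hAu).mul (isUnit_stdJ n)).mul (isUnit_nonsing_inv_iff.2 hAu)
  obtain ⟨O, d, hO, hd, hOK⟩ :=
    exists_orthogonal_transpose_mul_mul_eq_stdJ_mul_diagonal _ hK hKu
  refine ⟨A⁻¹ * O, d, hd, ?_, ?_⟩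
  · have hAMA : A⁻¹ * M * A⁻¹ = 1 := by
      rw [← hAA, nonsing_inv_mul_cancel_left _ _ hAd, mul_nonsing_inv _ hAd]
    rw [transpose_mul_mul_mul, hAiT, hAMA, Matrix.mul_one, hO]
  · rw [transpose_mul_mul_mul, hAiT, hOK]

theorem stmt4_general {n : ℕ} (M : Matrix (Fin n ⊕ Fin n) (Fin n ⊕ Fin n) ℝ)
    (hMPos : M.PosDef) :
    ∃ (S : Matrix (Fin n ⊕ Fin n) (Fin n ⊕ Fin n) ℝ) (lam : Fin n → ℝ),
      IsSymplectic S ∧ (∀ j, 0 < lam j) ∧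
        Sᵀ * M * S = Matrix.fromBlocks (Matrix.diagonal lam) 0 0 (Matrix.diagonal lam) := by
  obtain ⟨T, d, hd, hTM, hTJ⟩ := exists_transpose_mul_mul_eq_one_and_stdJ_mul_diagonal M hMPos
  set e : Fin n → ℝ := fun j => (√(d j))⁻¹
  have hee : e * e = d⁻¹ := funext fun j => by
    simp [e, ← mul_inv, Real.mul_self_sqrt (hd j).le]
  have hede : e * d * e = 1 := by
    rw [mul_right_comm, hee]
    exact funext fun j => inv_mul_cancel₀ (hd j).ne'
  refine ⟨T * diagonal (Sum.elim e e), d⁻¹, ?_, fun j => inv_pos.2 (hd j), ?_⟩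
  · rw [IsSymplectic, transpose_mul_mul_mul, diagonal_transpose, hTJ,
      diagonal_mul_stdJ_mul_diagonal_eq_stdJ hede]
  · rw [transpose_mul_mul_mul, diagonal_transpose, hTM, Matrix.mul_one, fromBlocks_diagonal,
      ← hee, Sum.elim_mul_mul]
    exact diagonal_mul_diagonal _ _

/-- **Williamson's symplectic diagonalization theorem.** Every real symmetric
positive definite `2n × 2n` matrix `M` can be diagonalized as `Sᵀ M S = [[Λ, 0], [0, Λ]]` with `S`
symplectic and `Λ = diag(λ₁, …, λₙ)`, `λⱼ > 0`. -/
theorem stmt4 {n : ℕ} (M : Matrix (Fin n ⊕ Fin n) (Fin n ⊕ Fin n) ℝ)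
    (hMSymm : M.IsSymm) (hMPos : M.PosDef) :
    ∃ (S : Matrix (Fin n ⊕ Fin n) (Fin n ⊕ Fin n) ℝ) (lam : Fin n → ℝ),
      IsSymplectic S ∧ (∀ j, 0 < lam j) ∧
        Sᵀ * M * S = Matrix.fromBlocks (Matrix.diagonal lam) 0 0 (Matrix.diagonal lam) :=
  stmt4_general M hMPos
end
end

section
/- Let M be a real symmetric positive definite 2n×2n matrix and suppose SᵀMS = [[Λ, 0],[0, Λ]] for some real symplectic matrix S, where Λ = diag(λ_1, …, λ_n) with all λ_j > 0. Then the complex eigenvalues of the matrix JM are precisely the purely imaginary numbers ±iλ_1, …, ±iλ_n; equivalently, the characteristic polynomial of JM (over ℂ) equals ∏_{j=1}^n (t² + λ_j²). -/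
open Matrix MeasureTheory
open scoped ComplexOrder

noncomputable section

/-! Symplecticity of `S` gives `S J Sᵀ = J`, so `J M = S (J D) S⁻¹` with `D = Sᵀ M S`: the
matrices `J M` and `J D = [[0, Λ], [-Λ, 0]]` have the same characteristic polynomial. Interleaving
the two copies of the index set turns a block matrix with diagonal blocks into a block-diagonal
matrix of `2 × 2` blocks `[[t, -λⱼ], [λⱼ, t]]`, whence `∏ⱼ (t² + λⱼ²)`. -/

open Polynomial

namespace Matrix

variable {m R : Type*} [Fintype m] [DecidableEq m] [CommRing R]

theorem det_fromBlocks_diagonal (a b c d : m → R) :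
    (fromBlocks (diagonal a) (diagonal b) (diagonal c) (diagonal d)).det
      = ∏ i, (a i * d i - b i * c i) := by
  let e : Fin 2 × m ≃ m ⊕ m :=
    (finTwoEquiv.prodCongr (Equiv.refl m)).trans (Equiv.boolProdEquivSum m)
  have hblock : (fromBlocks (diagonal a) (diagonal b) (diagonal c) (diagonal d)).submatrix e e
      = blockDiagonal fun i => !![a i, b i; c i, d i] := by
    ext ⟨k, i⟩ ⟨l, j⟩
    fin_cases k <;> fin_cases l <;>
      by_cases h : i = j <;> simp [e, blockDiagonal_apply, h, finTwoEquiv]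
  rw [← det_submatrix_equiv_self e, hblock, det_blockDiagonal]
  simp only [det_fin_two_of]

theorem charpoly_fromBlocks_diagonal (a b c d : m → R) :
    (fromBlocks (diagonal a) (diagonal b) (diagonal c) (diagonal d)).charpoly
      = ∏ i, ((X - C (a i)) * (X - C (d i)) - C (b i) * C (c i)) := by
  have : (fromBlocks (diagonal a) (diagonal b) (diagonal c) (diagonal d)).charmatrix
      = fromBlocks (diagonal fun i => X - C (a i)) (diagonal fun i => -C (b i))
          (diagonal fun i => -C (c i)) (diagonal fun i => X - C (d i)) := by
    ext (i | i) (j | j) <;> by_cases h : i = j <;> simp [h]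
  rw [charpoly, this, det_fromBlocks_diagonal]
  simp only [neg_mul_neg]

end Matrix

theorem stdJ_eq_neg_J (n : ℕ) : stdJ n = -J (Fin n) ℝ := by
  simp [stdJ, J, fromBlocks_neg]

theorem isSymplectic_iff_mem_symplecticGroup {n : ℕ}
    {S : Matrix (Fin n ⊕ Fin n) (Fin n ⊕ Fin n) ℝ} :
    IsSymplectic S ↔ S ∈ symplecticGroup (Fin n) ℝ := by
  rw [SymplecticGroup.mem_iff', IsSymplectic, stdJ_eq_neg_J, Matrix.mul_neg, Matrix.neg_mul, neg_inj]

theorem IsSymplectic.charpoly_stdJ_mul_transpose_mul_mul {n : ℕ}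
    {S : Matrix (Fin n ⊕ Fin n) (Fin n ⊕ Fin n) ℝ} (hS : IsSymplectic S)
    (M : Matrix (Fin n ⊕ Fin n) (Fin n ⊕ Fin n) ℝ) :
    (stdJ n * (Sᵀ * M * S)).charpoly = (stdJ n * M).charpoly := by
  rw [isSymplectic_iff_mem_symplecticGroup] at hS
  have hdet := SymplecticGroup.symplectic_det hS
  have hSJS : S * stdJ n * Sᵀ = stdJ n := by
    rw [stdJ_eq_neg_J, Matrix.mul_neg, Matrix.neg_mul, SymplecticGroup.mem_iff.mp hS]
  calc (stdJ n * (Sᵀ * M * S)).charpoly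
      = (S * (stdJ n * (Sᵀ * M * S)) * S⁻¹).charpoly :=
        (charpoly_units_conj (S.nonsingInvUnit hdet) _).symm
    _ = ((S * stdJ n * Sᵀ) * M * (S * S⁻¹)).charpoly := by simp only [Matrix.mul_assoc]
    _ = (stdJ n * M).charpoly := by rw [hSJS, mul_nonsing_inv S hdet, Matrix.mul_one]

theorem stdJ_mul_fromBlocks_diagonal {n : ℕ} (lam : Fin n → ℝ) :
    stdJ n * fromBlocks (diagonal lam) 0 0 (diagonal lam)
      = fromBlocks (diagonal 0) (diagonal lam) (diagonal (-lam)) (diagonal 0) := by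
  rw [stdJ, fromBlocks_multiply]
  simp

theorem stmt5_general {n : ℕ} (M S : Matrix (Fin n ⊕ Fin n) (Fin n ⊕ Fin n) ℝ)
    (lam : Fin n → ℝ) (hS : IsSymplectic S)
    (hdiag : Sᵀ * M * S = Matrix.fromBlocks (Matrix.diagonal lam) 0 0 (Matrix.diagonal lam)) :
    ((stdJ n * M).map Complex.ofReal).charpoly
      = ∏ j : Fin n, (Polynomial.X ^ 2 + Polynomial.C (((lam j : ℝ) : ℂ) ^ 2)) := by
  change ((stdJ n * M).map Complex.ofRealHom).charpoly = _
  rw [charpoly_map, ← hS.charpoly_stdJ_mul_transpose_mul_mul, hdiag, stdJ_mul_fromBlocks_diagonal,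
    charpoly_fromBlocks_diagonal, Polynomial.map_prod]
  refine Finset.prod_congr rfl fun j _ => ?_
  simp only [Pi.zero_apply, Pi.neg_apply, map_zero, map_neg, sub_zero, Polynomial.map_mul,
    Polynomial.map_X, Polynomial.map_C, Polynomial.map_sub, Polynomial.map_neg]
  rw [Complex.ofRealHom_eq_coe, C_pow]
  ring

/-- If `M` is symmetric positive definite with symplectic diagonalization
`Sᵀ M S = [[Λ, 0], [0, Λ]]`, `Λ = diag(λ₁, …, λₙ)`, then the complex eigenvalues of `JM` are
precisely `±iλ₁, …, ±iλₙ`: the characteristic polynomial of `JM` over `ℂ` equals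
`∏ⱼ (t² + λⱼ²)`. -/
theorem stmt5 {n : ℕ} (M S : Matrix (Fin n ⊕ Fin n) (Fin n ⊕ Fin n) ℝ)
    (hMSymm : M.IsSymm) (hMPos : M.PosDef)
    (lam : Fin n → ℝ) (hlam : ∀ j, 0 < lam j) (hS : IsSymplectic S)
    (hdiag : Sᵀ * M * S = Matrix.fromBlocks (Matrix.diagonal lam) 0 0 (Matrix.diagonal lam)) :
    ((stdJ n * M).map Complex.ofReal).charpoly
      = ∏ j : Fin n, (Polynomial.X ^ 2 + Polynomial.C (((lam j : ℝ) : ℂ) ^ 2)) :=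
  stmt5_general M S lam hS hdiag
end
end

section
/- Let ℏ > 0 and let Σ be a real symmetric 2n×2n matrix, written in block coordinates z = (x,p) so that Σ_{j,j} = (ΔX_j)², Σ_{n+j,n+j} = (ΔP_j)², and Σ_{j,n+j} = Δ(X_j,P_j). If the complex Hermitian matrix Σ + (iℏ/2)J is positive definite, then all the Robertson–Schrödinger inequalities hold strictly: for every j = 1,…,n, Σ_{j,j}·Σ_{n+j,n+j} > (Σ_{j,n+j})² + ℏ²/4. -/
open Matrix MeasureTheory
open scoped ComplexOrder

noncomputable section

/-! A positive definite Hermitian matrix has positive principal `2 × 2` minors. For the minor of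
`Σ + (iℏ/2)J` on the indices `x_j`, `p_j` this determinant is
`Σ_{jj} Σ_{n+j,n+j} - |Σ_{j,n+j} + iℏ/2|² = Σ_{jj} Σ_{n+j,n+j} - Σ_{j,n+j}² - ℏ²/4`. -/

theorem Matrix.PosDef.norm_sq_apply_lt_re_mul_re {ι 𝕜 : Type*} [Fintype ι] [RCLike 𝕜]
    {A : Matrix ι ι 𝕜} (hA : A.PosDef) {i j : ι} (hij : i ≠ j) :
    ‖A i j‖ ^ 2 < RCLike.re (A i i) * RCLike.re (A j j) := by
  have hminor : (A.submatrix ![i, j] ![i, j]).PosDef :=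
    hA.submatrix fun a b ↦ by fin_cases a <;> fin_cases b <;> simp [hij, hij.symm]
  have hdet : (A.submatrix ![i, j] ![i, j]).det
      = ((RCLike.re (A i i) * RCLike.re (A j j) - ‖A i j‖ ^ 2 : ℝ) : 𝕜) := by
    simp only [det_fin_two, submatrix_apply, cons_val_zero, cons_val_one]
    rw [← hA.isHermitian.apply j i, RCLike.star_def, RCLike.mul_conj]
    simp [hA.isHermitian.coe_re_apply_self]
  have := hminor.det_pos
  rwa [hdet, RCLike.ofReal_pos, sub_pos] at this

theorem stmt8_general {n : ℕ} (ℏ : ℝ)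
    (Cov : Matrix (Fin n ⊕ Fin n) (Fin n ⊕ Fin n) ℝ)
    (hquant : (Cov.map Complex.ofReal
        + (Complex.I * ((ℏ : ℂ) / 2)) • (stdJ n).map Complex.ofReal).PosDef) :
    ∀ j : Fin n,
      Cov (Sum.inl j) (Sum.inl j) * Cov (Sum.inr j) (Sum.inr j)
        > Cov (Sum.inl j) (Sum.inr j) ^ 2 + ℏ ^ 2 / 4 := by
  intro j
  have h := hquant.norm_sq_apply_lt_re_mul_re (Sum.inl_ne_inr (a := j) (b := j))
  simp only [stdJ, Matrix.add_apply, map_apply, Matrix.smul_apply, fromBlocks_apply₁₂,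
    one_apply_eq, Complex.ofReal_one, smul_eq_mul, mul_one, fromBlocks_apply₁₁, Matrix.zero_apply,
    Complex.ofReal_zero, mul_zero, add_zero, RCLike.re_to_complex, Complex.ofReal_re,
    fromBlocks_apply₂₂] at h
  have hentry : ‖(Cov (Sum.inl j) (Sum.inr j) : ℂ) + Complex.I * (ℏ / 2)‖ ^ 2
      = Cov (Sum.inl j) (Sum.inr j) ^ 2 + ℏ ^ 2 / 4 := by
    rw [mul_comm, ← Complex.ofReal_ofNat, ← Complex.ofReal_div, Complex.sq_norm,
      Complex.normSq_add_mul_I]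
    ring
  linarith

/-- If `Σ` is real symmetric and the Hermitian matrix `Σ + (iℏ/2)J` is positive
definite, then all Robertson–Schrödinger inequalities hold strictly:
`Σ_{jj} Σ_{n+j,n+j} > Σ_{j,n+j}² + ℏ²/4` for all `j`. -/
theorem stmt8 {n : ℕ} (ℏ : ℝ) (hℏ : 0 < ℏ)
    (Cov : Matrix (Fin n ⊕ Fin n) (Fin n ⊕ Fin n) ℝ) (hCovSymm : Cov.IsSymm)
    (hquant : (Cov.map Complex.ofReal
        + (Complex.I * ((ℏ : ℂ) / 2)) • (stdJ n).map Complex.ofReal).PosDef) :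
    ∀ j : Fin n,
      Cov (Sum.inl j) (Sum.inl j) * Cov (Sum.inr j) (Sum.inr j)
        > Cov (Sum.inl j) (Sum.inr j) ^ 2 + ℏ ^ 2 / 4 :=
  stmt8_general ℏ Cov hquant
end
end

section
/- Let ℏ > 0 and let Σ be a real symmetric 2n×2n matrix such that the complex Hermitian matrix Σ + (iℏ/2)J is positive semidefinite. Then the Robertson–Schrödinger inequalities hold: for every j = 1,…,n, Σ_{j,j}·Σ_{n+j,n+j} ≥ (Σ_{j,n+j})² + ℏ²/4. -/
/-!
A positive semidefinite Hermitian matrix has nonnegative principal `2 × 2` minors, so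
`|A i j|² ≤ A i i · A j j`. In the `(x_j, p_j)` minor of `Σ + (iℏ/2)J` the diagonal entries are
`Σ_{jj}` and `Σ_{n+j,n+j}`, while the off-diagonal entry is `Σ_{j,n+j} + iℏ/2`, whose squared
modulus is `Σ_{j,n+j}² + ℏ²/4`.
-/

open Matrix MeasureTheory
open scoped ComplexOrder

noncomputable section

theorem Matrix.PosSemidef.norm_sq_apply_le_re_mul_re {𝕜 ι : Type*} [RCLike 𝕜] [Fintype ι]
    {A : Matrix ι ι 𝕜} (hA : A.PosSemidef) (i j : ι) :
    ‖A i j‖ ^ 2 ≤ RCLike.re (A i i) * RCLike.re (A j j) := by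
  have hdet : 0 ≤ A i i * A j j - A i j * A j i := by
    have := (hA.submatrix ![i, j]).det_nonneg
    rwa [det_fin_two] at this
  have hji : A j i = star (A i j) := (hA.isHermitian.apply j i).symm
  rw [hji, RCLike.star_def, RCLike.mul_conj, ← hA.isHermitian.coe_re_apply_self i,
    ← hA.isHermitian.coe_re_apply_self j, sub_nonneg] at hdet
  exact_mod_cast hdet

theorem stmt9_general {n : ℕ} (ℏ : ℝ)
    (Cov : Matrix (Fin n ⊕ Fin n) (Fin n ⊕ Fin n) ℝ)
    (hquant : (Cov.map Complex.ofReal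
        + (Complex.I * ((ℏ : ℂ) / 2)) • (stdJ n).map Complex.ofReal).PosSemidef) :
    ∀ j : Fin n,
      Cov (Sum.inl j) (Sum.inl j) * Cov (Sum.inr j) (Sum.inr j)
        ≥ Cov (Sum.inl j) (Sum.inr j) ^ 2 + ℏ ^ 2 / 4 := by
  intro j
  have hxp := hquant.norm_sq_apply_le_re_mul_re (Sum.inl j) (Sum.inr j)
  have hnorm (x : ℝ) : ‖(x : ℂ) + Complex.I * ((ℏ : ℂ) / 2)‖ ^ 2 = x ^ 2 + ℏ ^ 2 / 4 := by
    rw [mul_comm, ← Complex.ofReal_ofNat, ← Complex.ofReal_div, Complex.sq_norm,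
      Complex.normSq_add_mul_I]
    ring
  simpa [stdJ, hnorm] using hxp

/-- If `Σ` is real symmetric and the Hermitian matrix `Σ + (iℏ/2)J` is positive
semidefinite, then the Robertson–Schrödinger inequalities hold:
`Σ_{jj} Σ_{n+j,n+j} ≥ Σ_{j,n+j}² + ℏ²/4` for all `j`. -/
theorem stmt9 {n : ℕ} (ℏ : ℝ) (hℏ : 0 < ℏ)
    (Cov : Matrix (Fin n ⊕ Fin n) (Fin n ⊕ Fin n) ℝ) (hCovSymm : Cov.IsSymm)
    (hquant : (Cov.map Complex.ofReal
        + (Complex.I * ((ℏ : ℂ) / 2)) • (stdJ n).map Complex.ofReal).PosSemidef) :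
    ∀ j : Fin n,
      Cov (Sum.inl j) (Sum.inl j) * Cov (Sum.inr j) (Sum.inr j)
        ≥ Cov (Sum.inl j) (Sum.inr j) ^ 2 + ℏ ^ 2 / 4 :=
  stmt9_general ℏ Cov hquant
end
end

section
/- Let ℏ > 0, let M be a real symmetric positive definite 2n×2n matrix with symplectic eigenvalues λ_1 ≥ … ≥ λ_n (so S₀ᵀMS₀ = diag(λ_1,…,λ_n,λ_1,…,λ_n) for some symplectic S₀), and let Ω = {z ∈ ℝ^{2n} : zᵀMz ≤ ℏ}. If λ_1 ≤ 1, then Ω contains a quantum blob: there exists a real symplectic matrix S such that S(B_{√ℏ}) ⊆ Ω, where B_{√ℏ} is the closed Euclidean ball of radius √ℏ centered at the origin. -/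
/-! Williamson's normal form already provides the blob: for `z = (x, p)` one has
`(S₀ z)ᵀ M (S₀ z) = ∑ⱼ λⱼ (xⱼ² + pⱼ²)`, which is at most `|z|²` because every `λⱼ ≤ λ₁ ≤ 1`.
Hence `S₀` maps the ball `B_{√ℏ}` into `Ω`. -/

open Matrix MeasureTheory
open scoped ComplexOrder

noncomputable section

theorem dotProduct_mulVec_mulVec_eq_transpose_mul {m n R : Type*} [Fintype m] [Fintype n]
    [CommSemiring R] (S : Matrix m n R) (M : Matrix m m R) (z : n → R) :
    S *ᵥ z ⬝ᵥ M *ᵥ (S *ᵥ z) = z ⬝ᵥ (Sᵀ * M * S) *ᵥ z := by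
  rw [← mulVec_mulVec, ← mulVec_mulVec, dotProduct_mulVec z, vecMul_transpose]

theorem dotProduct_diagonal_mulVec_le_dotProduct_self {m R : Type*} [Fintype m] [DecidableEq m]
    [CommRing R] [LinearOrder R] [IsStrictOrderedRing R] {d : m → R} (hd : ∀ i, d i ≤ 1)
    (z : m → R) : z ⬝ᵥ diagonal d *ᵥ z ≤ z ⬝ᵥ z := by
  refine Finset.sum_le_sum fun i _ => ?_
  calc z i * (diagonal d *ᵥ z) i = d i * (z i * z i) := by rw [mulVec_diagonal]; ring
    _ ≤ 1 * (z i * z i) := mul_le_mul_of_nonneg_right (hd i) (mul_self_nonneg _)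
    _ = z i * z i := one_mul _

theorem stmt12_general {n : ℕ} (hn : 0 < n) (ℏ : ℝ)
    (M : Matrix (Fin n ⊕ Fin n) (Fin n ⊕ Fin n) ℝ)
    (lam : Fin n → ℝ) (hord : Antitone lam)
    (S₀ : Matrix (Fin n ⊕ Fin n) (Fin n ⊕ Fin n) ℝ) (hS₀ : IsSymplectic S₀)
    (hdiag : S₀ᵀ * M * S₀ = Matrix.fromBlocks (Matrix.diagonal lam) 0 0 (Matrix.diagonal lam))
    (hlam1 : lam ⟨0, hn⟩ ≤ 1) :
    ∃ S : Matrix (Fin n ⊕ Fin n) (Fin n ⊕ Fin n) ℝ, IsSymplectic S ∧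
      S.mulVec '' {z : Fin n ⊕ Fin n → ℝ | z ⬝ᵥ z ≤ ℏ}
        ⊆ {z : Fin n ⊕ Fin n → ℝ | z ⬝ᵥ M.mulVec z ≤ ℏ} := by
  have hlam_le_one : ∀ j, lam j ≤ 1 := fun j => (hord (Fin.mk_le_of_le_val j.val.zero_le)).trans hlam1
  have hblocks_le_one : ∀ i, Sum.elim lam lam i ≤ 1 := Sum.rec hlam_le_one hlam_le_one
  refine ⟨S₀, hS₀, ?_⟩
  rintro _ ⟨z, hz, rfl⟩
  calc S₀ *ᵥ z ⬝ᵥ M *ᵥ (S₀ *ᵥ z) = z ⬝ᵥ diagonal (Sum.elim lam lam) *ᵥ z := by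
        rw [dotProduct_mulVec_mulVec_eq_transpose_mul, hdiag, fromBlocks_diagonal]
    _ ≤ z ⬝ᵥ z := dotProduct_diagonal_mulVec_le_dotProduct_self hblocks_le_one z
    _ ≤ ℏ := hz

/-- Let `M` be symmetric positive definite with symplectic eigenvalues
`λ₁ ≥ … ≥ λₙ`, and `Ω = {z : zᵀMz ≤ ℏ}`. If `λ₁ ≤ 1`, then `Ω` contains a quantum blob, i.e. the
image under some symplectic matrix `S` of the closed Euclidean ball `B_{√ℏ} = {z : z ⬝ᵥ z ≤ ℏ}`. -/
theorem stmt12 {n : ℕ} (hn : 0 < n) (ℏ : ℝ) (hℏ : 0 < ℏ)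
    (M : Matrix (Fin n ⊕ Fin n) (Fin n ⊕ Fin n) ℝ)
    (hMSymm : M.IsSymm) (hMPos : M.PosDef)
    (lam : Fin n → ℝ) (hlampos : ∀ j, 0 < lam j) (hord : Antitone lam)
    (S₀ : Matrix (Fin n ⊕ Fin n) (Fin n ⊕ Fin n) ℝ) (hS₀ : IsSymplectic S₀)
    (hdiag : S₀ᵀ * M * S₀ = Matrix.fromBlocks (Matrix.diagonal lam) 0 0 (Matrix.diagonal lam))
    (hlam1 : lam ⟨0, hn⟩ ≤ 1) :
    ∃ S : Matrix (Fin n ⊕ Fin n) (Fin n ⊕ Fin n) ℝ, IsSymplectic S ∧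
      S.mulVec '' {z : Fin n ⊕ Fin n → ℝ | z ⬝ᵥ z ≤ ℏ}
        ⊆ {z : Fin n ⊕ Fin n → ℝ | z ⬝ᵥ M.mulVec z ≤ ℏ} :=
  stmt12_general hn ℏ M lam hord S₀ hS₀ hdiag hlam1
end
end

section
/- (Wigner transform of a Gaussian.) Let ℏ > 0, let X and Y be real symmetric n×n matrices with X positive definite, and let ψ : ℝⁿ → ℂ be the Gaussian ψ(x) = (πℏ)^{-n/4}(det X)^{1/4} exp(−(1/2ℏ) xᵀ(X+iY)x). Then for all (x,p) ∈ ℝⁿ × ℝⁿ, (1/(2πℏ))ⁿ ∫_{ℝⁿ} exp(−(i/ℏ) p·y) ψ(x + y/2) conj(ψ(x − y/2)) dy = (πℏ)^{-n} exp(−(1/ℏ) zᵀGz), where z = (x,p) and G is the real 2n×2n block matrix G = [[X + YX^{-1}Y, YX^{-1}],[X^{-1}Y, X^{-1}]]. -/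
/-
The parallelogram law for `X` and polarization for the symmetric `Y` give
`ψ(x + y/2) conj ψ(x - y/2) = C² exp(-xᵀXx/ℏ) exp(-yᵀXy/(4ℏ) - i (Yx)·y/ℏ)`, where `C` is the
normalising constant, so the Wigner integral is the Fourier transform of a Gaussian in `y`,
evaluated at `p + Yx`. Writing `X = BᵀB` and substituting `y = B⁻¹u` reduces it to the standard
Gaussian integral, which yields `exp(-(Yx + p)ᵀX⁻¹(Yx + p)/ℏ)`; and
`zᵀGz = xᵀXx + (Yx + p)ᵀX⁻¹(Yx + p)` by expanding the blocks.
-/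

open Matrix MeasureTheory
open scoped ComplexOrder

noncomputable section

section QuadraticForm

variable {ι R : Type*} [Fintype ι] [CommRing R]

lemma Matrix.IsSymm.dotProduct_mulVec {M : Matrix ι ι R} (hM : M.IsSymm) (x y : ι → R) :
    x ⬝ᵥ M *ᵥ y = M *ᵥ x ⬝ᵥ y := by
  rw [Matrix.dotProduct_mulVec, ← mulVec_transpose, hM.eq]

lemma add_dotProduct_mulVec_add_add_sub (M : Matrix ι ι R) (x y : ι → R) :
    (x + y) ⬝ᵥ M *ᵥ (x + y) + (x - y) ⬝ᵥ M *ᵥ (x - y) =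
      2 * (x ⬝ᵥ M *ᵥ x) + 2 * (y ⬝ᵥ M *ᵥ y) := by
  simp only [mulVec_add, mulVec_sub, dotProduct_add, dotProduct_sub, add_dotProduct,
    sub_dotProduct]
  ring

lemma add_dotProduct_mulVec_add_sub_sub {M : Matrix ι ι R} (hM : M.IsSymm) (x y : ι → R) :
    (x + y) ⬝ᵥ M *ᵥ (x + y) - (x - y) ⬝ᵥ M *ᵥ (x - y) = 4 * (M *ᵥ x ⬝ᵥ y) := by
  have hyx : M *ᵥ y ⬝ᵥ x = M *ᵥ x ⬝ᵥ y := by rw [dotProduct_comm, hM.dotProduct_mulVec]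
  simp only [mulVec_add, mulVec_sub, dotProduct_add, dotProduct_sub, add_dotProduct,
    sub_dotProduct, hM.dotProduct_mulVec, hyx]
  ring

lemma sumElim_dotProduct_fromBlocks_mulVec_sumElim {A B Y : Matrix ι ι R} (hY : Y.IsSymm)
    (x p : ι → R) :
    Sum.elim x p ⬝ᵥ fromBlocks (A + Y * B * Y) (Y * B) (B * Y) B *ᵥ Sum.elim x p =
      x ⬝ᵥ A *ᵥ x + (Y *ᵥ x + p) ⬝ᵥ B *ᵥ (Y *ᵥ x + p) := by
  rw [fromBlocks_mulVec, sumElim_dotProduct_sumElim]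
  simp only [add_mulVec, ← mulVec_mulVec, dotProduct_add, add_dotProduct, mulVec_add,
    hY.dotProduct_mulVec x, Sum.elim_comp_inl, Sum.elim_comp_inr]
  ring

end QuadraticForm

section Gaussian

variable {ι : Type*} [Fintype ι]

lemma integral_comp_mulVec {E : Type*} [DecidableEq ι] [NormedAddCommGroup E]
    [NormedSpace ℝ E] (f : (ι → ℝ) → E) {M : Matrix ι ι ℝ} (hM : M.det ≠ 0) :
    ∫ u, f (M *ᵥ u) = |M.det|⁻¹ • ∫ y, f y := by
  let e := (Matrix.toLin' M).equivOfDetNeZero (by simpa using hM)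
  have he : MeasurableEmbedding e := e.toContinuousLinearEquiv.toHomeomorph.measurableEmbedding
  change ∫ u, f (e u) = _
  rw [← he.integral_map]
  change ∫ y, f y ∂(Measure.map (Matrix.toLin' M) volume) = _
  rw [Real.map_matrix_volume_pi_eq_smul_volume_pi hM, integral_smul_measure,
    ENNReal.toReal_ofReal (abs_nonneg _), abs_inv]

open scoped MatrixOrder in
lemma Matrix.PosDef.exists_eq_transpose_mul_self [DecidableEq ι] {X : Matrix ι ι ℝ}
    (hX : X.PosDef) : ∃ B : Matrix ι ι ℝ, IsUnit B ∧ X = Bᵀ * B := by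
  simpa [star_eq_conjTranspose] using
    CStarAlgebra.isStrictlyPositive_iff_eq_star_mul_self.mp hX.isStrictlyPositive

open Complex in
lemma integral_cexp_neg_mul_dotProduct_self_sub_I_mul {c : ℝ} (hc : 0 < c) (v : ι → ℝ) :
    ∫ u : ι → ℝ, cexp (-c * (u ⬝ᵥ u : ℝ) - I * (v ⬝ᵥ u : ℝ)) =
      ((Real.pi / c) ^ (Fintype.card ι / 2 : ℝ) : ℝ) * cexp (-(v ⬝ᵥ v : ℝ) / (4 * c)) := by
  have h := GaussianFourier.integral_cexp_neg_mul_sum_add (b := c) (by simpa using hc)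
    (fun i => -I * v i)
  have hsq : ∀ i, (-I * (v i : ℂ)) ^ 2 = -(v i * v i : ℝ) := fun i => by
    push_cast; linear_combination (v i : ℂ) ^ 2 * I_sq
  simp only [hsq, Finset.sum_neg_distrib] at h
  convert h using 2
  · ext u
    push_cast [dotProduct, Finset.mul_sum, sq, sub_eq_add_neg, neg_mul, Finset.sum_neg_distrib,
      mul_assoc]
    rfl
  · rw [ofReal_cpow (by positivity)]; push_cast; rfl
  · push_cast [dotProduct]; rfl

open Complex in
lemma integral_cexp_neg_mul_dotProduct_mulVec_sub_I_mul [DecidableEq ι] {c : ℝ} (hc : 0 < c)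
    {X : Matrix ι ι ℝ} (hX : X.PosDef) (v : ι → ℝ) :
    ∫ y : ι → ℝ, cexp (-c * (y ⬝ᵥ X *ᵥ y : ℝ) - I * (v ⬝ᵥ y : ℝ)) =
      ((Real.pi / c) ^ (Fintype.card ι / 2 : ℝ) / √X.det : ℝ) *
        cexp (-(v ⬝ᵥ X⁻¹ *ᵥ v : ℝ) / (4 * c)) := by
  obtain ⟨B, hB, rfl⟩ := hX.exists_eq_transpose_mul_self
  have hdetB : B.det ≠ 0 := ((isUnit_iff_isUnit_det B).mp hB).ne_zero
  have hdetB' : B⁻¹.det ≠ 0 := by simpa [det_nonsing_inv] using hdetB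
  have hBB : B * B⁻¹ = 1 := mul_nonsing_inv B ((isUnit_iff_isUnit_det B).mp hB)
  have hquad : ∀ u, B⁻¹ *ᵥ u ⬝ᵥ (Bᵀ * B) *ᵥ (B⁻¹ *ᵥ u) = u ⬝ᵥ u := fun u => by
    rw [← mulVec_mulVec, dotProduct_mulVec, vecMul_transpose, mulVec_mulVec, hBB, one_mulVec]
  have hlin : ∀ u, v ⬝ᵥ B⁻¹ *ᵥ u = B⁻¹ᵀ *ᵥ v ⬝ᵥ u := fun u => by
    rw [dotProduct_mulVec, mulVec_transpose]
  have hinv : v ⬝ᵥ (Bᵀ * B)⁻¹ *ᵥ v = B⁻¹ᵀ *ᵥ v ⬝ᵥ B⁻¹ᵀ *ᵥ v := by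
    rw [Matrix.mul_inv_rev, ← transpose_nonsing_inv, ← mulVec_mulVec, dotProduct_mulVec,
      ← mulVec_transpose]
  have hdet : √(Bᵀ * B).det = |B.det| := by
    rw [det_mul, det_transpose, ← sq, Real.sqrt_sq_eq_abs]
  rw [← smul_right_inj (inv_ne_zero (abs_ne_zero.mpr hdetB')), ← integral_comp_mulVec _ hdetB']
  simp only [hquad, hlin, integral_cexp_neg_mul_dotProduct_self_sub_I_mul hc, hinv, hdet]
  rw [det_nonsing_inv, Ring.inverse_eq_inv', abs_inv, inv_inv, Complex.real_smul]
  push_cast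
  field_simp [abs_ne_zero.mpr hdetB]

def gaussianPacket (ℏ : ℝ) (X Y : Matrix ι ι ℝ) (x : ι → ℝ) : ℂ :=
  Complex.exp (-(1 / (2 * (ℏ : ℂ))) *
    (((x ⬝ᵥ X.mulVec x : ℝ) : ℂ) + Complex.I * ((x ⬝ᵥ Y.mulVec x : ℝ) : ℂ)))

open Complex in
lemma gaussianPacket_add_mul_conj_sub (ℏ : ℝ) (X : Matrix ι ι ℝ) {Y : Matrix ι ι ℝ}
    (hY : Y.IsSymm) (x y : ι → ℝ) :
    gaussianPacket ℏ X Y (x + y) * starRingEnd ℂ (gaussianPacket ℏ X Y (x - y)) =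
      cexp (-((x ⬝ᵥ X *ᵥ x + y ⬝ᵥ X *ᵥ y : ℝ) / ℏ) - 2 * I * ((Y *ᵥ x ⬝ᵥ y : ℝ) / ℏ)) := by
  have hX := congrArg ((↑) : ℝ → ℂ) (add_dotProduct_mulVec_add_add_sub X x y)
  have hY := congrArg ((↑) : ℝ → ℂ) (add_dotProduct_mulVec_add_sub_sub hY x y)
  push_cast at hX hY
  rw [gaussianPacket, gaussianPacket, ← exp_conj, ← exp_add]
  congr 1
  simp only [map_mul, map_add, map_neg, map_div₀, map_one, map_ofNat, conj_ofReal, conj_I]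
  push_cast
  linear_combination (-(1 / (2 * (ℏ : ℂ)))) * hX + (-(I / (2 * ℏ))) * hY

open Complex in
lemma cexp_mul_gaussianPacket_mul_conj (ℏ C : ℝ) (X : Matrix ι ι ℝ)
    {Y : Matrix ι ι ℝ} (hY : Y.IsSymm) (x p y : ι → ℝ) :
    cexp (-(I / ℏ) * (p ⬝ᵥ y : ℝ)) * (C * gaussianPacket ℏ X Y (x + y / 2)) *
        starRingEnd ℂ (C * gaussianPacket ℏ X Y (x - y / 2)) =
      ((C ^ 2 * Real.exp (-(x ⬝ᵥ X *ᵥ x) / ℏ) : ℝ) : ℂ) *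
        cexp (-((4 * ℏ)⁻¹ : ℝ) * (y ⬝ᵥ X *ᵥ y : ℝ) - I * ((ℏ⁻¹ • (Y *ᵥ x + p)) ⬝ᵥ y : ℝ)) := by
  have hhalf : y / 2 = (2⁻¹ : ℝ) • y := by ext; simp [div_eq_inv_mul]
  have hregroup : ∀ a b c d : ℂ, a * (c * b) * (c * d) = c ^ 2 * a * (b * d) := fun _ _ _ _ => by
    ring
  rw [map_mul, conj_ofReal, hregroup, gaussianPacket_add_mul_conj_sub ℏ X hY, hhalf]
  simp only [mulVec_smul, dotProduct_smul, smul_dotProduct, add_dotProduct, smul_eq_mul]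
  push_cast
  simp only [mul_assoc _ (cexp _), ← exp_add]
  congr 2
  ring

end Gaussian

lemma gaussian_wigner_prefactor {a d : ℝ} (ha : 0 < a) (hd : 0 < d) (n : ℕ) :
    (1 / (2 * a)) ^ n * ((a ^ (-(n : ℝ) / 4) * d ^ ((1 : ℝ) / 4)) ^ 2 *
      ((4 * a) ^ ((n : ℝ) / 2) / √d)) = a ^ (-(n : ℝ)) := by
  have h4 : (4 * a) ^ ((n : ℝ) / 2) = 2 ^ n * a ^ ((n : ℝ) / 2) := by
    rw [Real.mul_rpow (by norm_num) ha.le, show (4 : ℝ) = 2 ^ (2 : ℝ) by norm_num,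
      ← Real.rpow_mul (by norm_num), mul_div_cancel₀ _ two_ne_zero, Real.rpow_natCast]
  have ha2 : (a ^ (-(n : ℝ) / 4)) ^ 2 * a ^ ((n : ℝ) / 2) = 1 := by
    rw [← Real.rpow_natCast, ← Real.rpow_mul ha.le, ← Real.rpow_add ha]
    ring_nf
    exact Real.rpow_zero a
  have hd2 : (d ^ ((1 : ℝ) / 4)) ^ 2 = √d := by
    rw [← Real.rpow_natCast, ← Real.rpow_mul hd.le, Real.sqrt_eq_rpow]
    norm_num
  rw [Real.rpow_neg ha.le, Real.rpow_natCast, mul_pow, hd2, h4]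
  calc (1 / (2 * a)) ^ n * ((a ^ (-(n : ℝ) / 4)) ^ 2 * √d * (2 ^ n * a ^ ((n : ℝ) / 2) / √d))
      = (a ^ n)⁻¹ * ((a ^ (-(n : ℝ) / 4)) ^ 2 * a ^ ((n : ℝ) / 2)) := by
        rw [one_div, mul_inv, mul_pow, inv_pow, inv_pow]
        field_simp [(Real.sqrt_pos.mpr hd).ne']
    _ = (a ^ n)⁻¹ := by rw [ha2, mul_one]

theorem stmt16_general {n : ℕ} (ℏ : ℝ) (hℏ : 0 < ℏ)
    (X Y : Matrix (Fin n) (Fin n) ℝ) (hY : Y.IsSymm) (hXpos : X.PosDef)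
    (ψ : (Fin n → ℝ) → ℂ)
    (hψ : ∀ x : Fin n → ℝ,
      ψ x = (((Real.pi * ℏ) ^ (-(n : ℝ) / 4) * X.det ^ ((1 : ℝ) / 4) : ℝ) : ℂ) *
        Complex.exp (-(1 / (2 * (ℏ : ℂ))) *
          (((x ⬝ᵥ X.mulVec x : ℝ) : ℂ) + Complex.I * ((x ⬝ᵥ Y.mulVec x : ℝ) : ℂ)))) :
    ∀ x p : Fin n → ℝ,
      (((1 / (2 * Real.pi * ℏ)) ^ n : ℝ) : ℂ) *
          ∫ y : Fin n → ℝ,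
            Complex.exp (-(Complex.I / (ℏ : ℂ)) * ((p ⬝ᵥ y : ℝ) : ℂ)) *
              ψ (x + y / 2) * (starRingEnd ℂ) (ψ (x - y / 2))
        = (((Real.pi * ℏ) ^ (-(n : ℝ)) *
            Real.exp (-(1 / ℏ) * (Sum.elim x p ⬝ᵥ
              (Matrix.fromBlocks (X + Y * X⁻¹ * Y) (Y * X⁻¹) (X⁻¹ * Y) X⁻¹).mulVec
                (Sum.elim x p))) : ℝ) : ℂ) := by
  intro x p
  have hψ' : ψ = fun z => _ * gaussianPacket ℏ X Y z := funext hψ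
  have hc : (0 : ℝ) < (4 * ℏ)⁻¹ := by positivity
  have hvariance : Real.pi / (4 * ℏ)⁻¹ = 4 * (Real.pi * ℏ) := by field_simp
  have hdecay : ∀ w : Fin n → ℝ, Complex.exp (-((ℏ⁻¹ • w) ⬝ᵥ X⁻¹ *ᵥ (ℏ⁻¹ • w) : ℝ) /
      (4 * ((4 * ℏ)⁻¹ : ℝ))) = Real.exp (-(w ⬝ᵥ X⁻¹ *ᵥ w) / ℏ) := fun w => by
    simp only [mulVec_smul, dotProduct_smul, smul_dotProduct, smul_eq_mul, Complex.ofReal_exp]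
    congr 1
    push_cast
    field_simp
  have hsplit : ∀ a b : ℝ, Real.exp (-(1 / ℏ) * (a + b)) = Real.exp (-a / ℏ) * Real.exp (-b / ℏ) :=
    fun a b => by rw [← Real.exp_add]; congr 1; ring
  simp_rw [hψ', cexp_mul_gaussianPacket_mul_conj ℏ _ X hY, integral_const_mul,
    integral_cexp_neg_mul_dotProduct_mulVec_sub_I_mul hc hXpos, hdecay,
    sumElim_dotProduct_fromBlocks_mulVec_sumElim hY, Fintype.card_fin, hvariance, hsplit,
    ← gaussian_wigner_prefactor (by positivity : 0 < Real.pi * ℏ) hXpos.det_pos n]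
  push_cast
  ring

/-- **Wigner transform of a Gaussian.** For the normalized Gaussian
`ψ(x) = (πℏ)^{-n/4} (det X)^{1/4} exp(-(1/2ℏ) xᵀ(X+iY)x)` (`X, Y` real symmetric, `X > 0`), the
Wigner transform `(1/(2πℏ))ⁿ ∫ e^{-ip·y/ℏ} ψ(x+y/2) conj(ψ(x-y/2)) dy` equals
`(πℏ)^{-n} exp(-(1/ℏ) zᵀGz)` with `z = (x,p)` and
`G = [[X + YX⁻¹Y, YX⁻¹], [X⁻¹Y, X⁻¹]]`. -/
theorem stmt16 {n : ℕ} (ℏ : ℝ) (hℏ : 0 < ℏ)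
    (X Y : Matrix (Fin n) (Fin n) ℝ) (hX : X.IsSymm) (hY : Y.IsSymm) (hXpos : X.PosDef)
    (ψ : (Fin n → ℝ) → ℂ)
    (hψ : ∀ x : Fin n → ℝ,
      ψ x = (((Real.pi * ℏ) ^ (-(n : ℝ) / 4) * X.det ^ ((1 : ℝ) / 4) : ℝ) : ℂ) *
        Complex.exp (-(1 / (2 * (ℏ : ℂ))) *
          (((x ⬝ᵥ X.mulVec x : ℝ) : ℂ) + Complex.I * ((x ⬝ᵥ Y.mulVec x : ℝ) : ℂ)))) :
    ∀ x p : Fin n → ℝ,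
      (((1 / (2 * Real.pi * ℏ)) ^ n : ℝ) : ℂ) *
          ∫ y : Fin n → ℝ,
            Complex.exp (-(Complex.I / (ℏ : ℂ)) * ((p ⬝ᵥ y : ℝ) : ℂ)) *
              ψ (x + y / 2) * (starRingEnd ℂ) (ψ (x - y / 2))
        = (((Real.pi * ℏ) ^ (-(n : ℝ)) *
            Real.exp (-(1 / ℏ) * (Sum.elim x p ⬝ᵥ
              (Matrix.fromBlocks (X + Y * X⁻¹ * Y) (Y * X⁻¹) (X⁻¹ * Y) X⁻¹).mulVec
                (Sum.elim x p))) : ℝ) : ℂ) :=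
  stmt16_general ℏ hℏ X Y hY hXpos ψ hψ
end
end

section
/- Every symmetric positive definite symplectic matrix is the Wigner matrix of a Gaussian state: let G be a real 2n×2n matrix that is symmetric, positive definite, and symplectic. Then there exist real symmetric n×n matrices X and Y with X positive definite such that G = [[X + YX^{-1}Y, YX^{-1}],[X^{-1}Y, X^{-1}]]; equivalently, G = SᵀS with S symplectic of the lower block-triangular form S = [[X^{1/2}, 0],[X^{-1/2}Y, X^{-1/2}]]. -/
/-!
Write `G = [[A, B], [Bᵀ, D]]`. The block `D` is positive definite, being a principal block of `G`,
and for symmetric `G` the symplectic relations read `A D - B² = 1` and `Bᵀ D = D B`. With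
`X = D⁻¹` and `Y = B D⁻¹` (symmetric by the second relation) these say precisely that `G` has the
Wigner form. Any symmetric `T` with `T² = X` then gives `G = SᵀS` for the lower block-triangular
`S = [[T, 0], [T⁻¹Y, T⁻¹]]`, which is symplectic because `Tᵀ T⁻¹ = 1` and `Tᵀ (T⁻¹Y) = Y` is
symmetric.
-/
open Matrix MeasureTheory
open scoped ComplexOrder

noncomputable section

/-- Square root of a positive semidefinite matrix (definition from the older Mathlib,
where `Matrix.PosSemidef.sqrt` existed). -/
noncomputable def Matrix.PosSemidef.sqrt {n 𝕜 : Type*} [Fintype n] [RCLike 𝕜] [DecidableEq n]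
    {A : Matrix n n 𝕜} (hA : A.PosSemidef) : Matrix n n 𝕜 :=
  hA.1.eigenvectorUnitary.1 * diagonal ((↑) ∘ (√·) ∘ hA.1.eigenvalues) *
    (star hA.1.eigenvectorUnitary : Matrix n n 𝕜)

namespace Matrix.PosSemidef

variable {m 𝕜 : Type*} [Fintype m] [RCLike 𝕜] [DecidableEq m] {A : Matrix m m 𝕜}

theorem posSemidef_sqrt (hA : A.PosSemidef) : hA.sqrt.PosSemidef := by
  have hdiag : (diagonal ((↑) ∘ (√·) ∘ hA.1.eigenvalues : m → 𝕜)).PosSemidef :=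
    posSemidef_diagonal_iff.mpr fun i => by simp [Real.sqrt_nonneg]
  unfold PosSemidef.sqrt
  simpa [star_eq_conjTranspose] using
    hdiag.mul_mul_conjTranspose_same (hA.1.eigenvectorUnitary : Matrix m m 𝕜)

theorem sqrt_mul_self (hA : A.PosSemidef) : hA.sqrt * hA.sqrt = A := by
  have hU (M : Matrix m m 𝕜) :
      star hA.1.eigenvectorUnitary.1 * (hA.1.eigenvectorUnitary * M) = M := by
    rw [← Matrix.mul_assoc, Unitary.coe_star_mul_self, Matrix.one_mul]
  have hsq : diagonal ((↑) ∘ (√·) ∘ hA.1.eigenvalues) * diagonal ((↑) ∘ (√·) ∘ hA.1.eigenvalues)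
      = diagonal ((↑) ∘ hA.1.eigenvalues : m → 𝕜) := by
    rw [diagonal_mul_diagonal]
    congr 1 with i
    simp [← RCLike.ofReal_mul, Real.mul_self_sqrt (hA.eigenvalues_nonneg i)]
  conv_rhs => rw [hA.1.spectral_theorem, Unitary.conjStarAlgAut_apply]
  rw [PosSemidef.sqrt, ← hsq]
  simp only [Matrix.mul_assoc, hU]

theorem isUnit_det_sqrt (hA : A.PosSemidef) (hdet : IsUnit A.det) : IsUnit hA.sqrt.det :=
  isUnit_of_mul_isUnit_left (by rwa [← det_mul, hA.sqrt_mul_self])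

end Matrix.PosSemidef

section Wigner

variable {m α : Type*} [Fintype m] [DecidableEq m] [CommRing α]

def wignerMatrix (X Y : Matrix m m α) : Matrix (m ⊕ m) (m ⊕ m) α :=
  fromBlocks (X + Y * X⁻¹ * Y) (Y * X⁻¹) (X⁻¹ * Y) X⁻¹

theorem fromBlocks_eq_wignerMatrix {A B D : Matrix m m α} (hD : IsUnit D.det)
    (hAD : A * D = 1 + B * B) (hBD : Bᵀ * D = D * B) :
    fromBlocks A B Bᵀ D = wignerMatrix D⁻¹ (B * D⁻¹) := by
  rw [wignerMatrix, nonsing_inv_nonsing_inv _ hD]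
  congr 1
  · calc A = A * D * D⁻¹ := (mul_nonsing_inv_cancel_right _ _ hD).symm
      _ = D⁻¹ + B * (D⁻¹ * D) * B * D⁻¹ := by
        rw [hAD, nonsing_inv_mul _ hD]; noncomm_ring
      _ = D⁻¹ + B * D⁻¹ * D * (B * D⁻¹) := by simp only [Matrix.mul_assoc]
  · exact (nonsing_inv_mul_cancel_right _ _ hD).symm
  · rw [← Matrix.mul_assoc, ← hBD, mul_nonsing_inv_cancel_right _ _ hD]

theorem isSymm_mul_nonsing_inv {B D : Matrix m m α} (hD : IsUnit D.det) (hDs : D.IsSymm)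
    (hBD : Bᵀ * D = D * B) : (B * D⁻¹).IsSymm := by
  rw [IsSymm, transpose_mul, transpose_nonsing_inv, hDs.eq]
  calc D⁻¹ * Bᵀ = D⁻¹ * (Bᵀ * D) * D⁻¹ := by
        rw [Matrix.mul_assoc, mul_nonsing_inv_cancel_right _ _ hD]
    _ = B * D⁻¹ := by rw [hBD, ← Matrix.mul_assoc, nonsing_inv_mul _ hD, Matrix.one_mul]

theorem wignerMatrix_eq_transpose_mul {X Y T : Matrix m m α} (hT : T.IsSymm) (hTT : T * T = X)
    (hY : Y.IsSymm) :
    wignerMatrix X Y = (fromBlocks T 0 (T⁻¹ * Y) T⁻¹)ᵀ * fromBlocks T 0 (T⁻¹ * Y) T⁻¹ := by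
  have hTi : T⁻¹ * T⁻¹ = X⁻¹ := by rw [← hTT, Matrix.mul_inv_rev]
  rw [wignerMatrix, fromBlocks_transpose, fromBlocks_multiply, transpose_mul, transpose_nonsing_inv,
    hT.eq, hY.eq, transpose_zero]
  simp only [Matrix.mul_assoc, ← Matrix.mul_assoc T⁻¹ T⁻¹, hTi, hTT, Matrix.zero_mul,
    Matrix.mul_zero, zero_add]

end Wigner

theorem isSymplectic_fromBlocks_iff {n : ℕ} {A B C D : Matrix (Fin n) (Fin n) ℝ} :
    IsSymplectic (fromBlocks A B C D) ↔
      Aᵀ * C = Cᵀ * A ∧ Aᵀ * D - Cᵀ * B = 1 ∧ Bᵀ * D = Dᵀ * B := by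
  rw [IsSymplectic, stdJ, fromBlocks_transpose, fromBlocks_multiply, fromBlocks_multiply,
    fromBlocks_inj]
  simp only [Matrix.mul_zero, Matrix.mul_one, Matrix.mul_neg, zero_add, add_zero, Matrix.neg_mul]
  have h21 : -(Dᵀ * A) + Bᵀ * C = -(Aᵀ * D - Cᵀ * B)ᵀ := by
    simp only [transpose_sub, transpose_mul, transpose_transpose]; abel
  rw [h21, neg_add_eq_zero, neg_add_eq_zero, neg_add_eq_sub]
  constructor
  · rintro ⟨h11, h12, -, h22⟩
    exact ⟨h11.symm, h12, h22.symm⟩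
  · rintro ⟨h11, h12, h22⟩
    exact ⟨h11.symm, h12, by rw [h12, transpose_one], h22.symm⟩

theorem isSymplectic_fromBlocks_zero₁₂ {n : ℕ} {T Y : Matrix (Fin n) (Fin n) ℝ} (hT : T.IsSymm)
    (hTdet : IsUnit T.det) (hY : Y.IsSymm) : IsSymplectic (fromBlocks T 0 (T⁻¹ * Y) T⁻¹) := by
  rw [isSymplectic_fromBlocks_iff, transpose_mul, hT.eq, hY.eq, transpose_nonsing_inv, hT.eq,
    mul_nonsing_inv _ hTdet, ← Matrix.mul_assoc, mul_nonsing_inv _ hTdet,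
    Matrix.mul_assoc, nonsing_inv_mul _ hTdet]
  simp

/-- Every symmetric positive definite symplectic matrix `G` is the Wigner matrix
of a Gaussian state: there exist real symmetric `X, Y` with `X` positive definite such that
`G = [[X + YX⁻¹Y, YX⁻¹], [X⁻¹Y, X⁻¹]]`; equivalently `G = SᵀS` with `S` the symplectic
lower block-triangular matrix `[[X^{1/2}, 0], [X^{-1/2}Y, X^{-1/2}]]`. -/
theorem stmt18 {n : ℕ} (G : Matrix (Fin n ⊕ Fin n) (Fin n ⊕ Fin n) ℝ)
    (hGSymm : G.IsSymm) (hGPos : G.PosDef) (hGSp : IsSymplectic G) :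
    ∃ (X Y : Matrix (Fin n) (Fin n) ℝ) (hXpos : X.PosDef), X.IsSymm ∧ Y.IsSymm ∧
      G = Matrix.fromBlocks (X + Y * X⁻¹ * Y) (Y * X⁻¹) (X⁻¹ * Y) X⁻¹ ∧
      (let S : Matrix (Fin n ⊕ Fin n) (Fin n ⊕ Fin n) ℝ :=
        Matrix.fromBlocks hXpos.posSemidef.sqrt 0
          (hXpos.posSemidef.sqrt⁻¹ * Y) hXpos.posSemidef.sqrt⁻¹
       G = Sᵀ * S ∧ IsSymplectic S) := by
  obtain ⟨A, B, C, D, rfl⟩ : ∃ A B C D, G = fromBlocks A B C D :=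
    ⟨_, _, _, _, (fromBlocks_toBlocks G).symm⟩
  obtain ⟨hA, rfl, -, hD⟩ := isSymm_fromBlocks_iff.mp hGSymm
  obtain ⟨-, hAD, hBD⟩ := isSymplectic_fromBlocks_iff.mp hGSp
  rw [hA.eq, transpose_transpose, sub_eq_iff_eq_add] at hAD
  rw [hD.eq] at hBD
  have hDpos : D.PosDef := hGPos.submatrix Sum.inr_injective
  have hDdet : IsUnit D.det := hDpos.isUnit.map detMonoidHom
  have hY := isSymm_mul_nonsing_inv hDdet hD hBD
  have hG := fromBlocks_eq_wignerMatrix hDdet hAD hBD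
  refine ⟨D⁻¹, B * D⁻¹, hDpos.inv, hD.inv, hY, hG, ?_⟩
  have hX := hDpos.inv.posSemidef
  have hT : hX.sqrt.IsSymm := isHermitian_iff_isSymm.mp hX.posSemidef_sqrt.isHermitian
  exact ⟨hG.trans (wignerMatrix_eq_transpose_mul hT hX.sqrt_mul_self hY),
    isSymplectic_fromBlocks_zero₁₂ hT (hX.isUnit_det_sqrt (hDpos.inv.isUnit.map detMonoidHom)) hY⟩
end
end
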